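/- Let P^{(1)},…,P^{(k)} be full horizontal rows of the grid G = G_{m,n} at heights h_1 < … < h_k such that h_i − h_{i−2} ≥ 2t + 2 for all 2 ≤ i ≤ k (with indices where defined), and let 𝒫 be the union of their vertex sets. Then for t ≤ (n−1)/2, the maximum over all vertices v of G of |B(v,t) ∩ 𝒫| is achieved by some vertex of 𝒫; i.e., max over v ∈ V(G) of |B(v,t) ∩ 𝒫| equals max over v ∈ 𝒫 of |B(v,t) ∩ 𝒫|. -/

import Mathlib

/-!
A ball of radius `t` meets a row at vertical distance `d ≤ t` from its centre in at most
`2(t - d) + 1` vertices, with equality when the centre lies in column `t`, where (as `2t < n`)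
the boundary cuts nothing off. Rows two apart are more than `2t` apart, so a ball meets at most
two of the chosen rows, at vertical distances `d₁` and `d₂` from its centre; these two rows are
`g ≤ d₁ + d₂` apart. Moving the centre to column `t` of the first row raises the count to
`(2t + 1) + (2(t - g) + 1)` (the second term dropped if `g > t`), which dominates
`(2(t - d₁) + 1) + (2(t - d₂) + 1)`.
-/

open SimpleGraph

/-- The set of vertices burned after `t` rounds of the burning process on `G`,
where `s i` is the source of fire chosen in round `i + 1`. -/
def burnSet {V : Type*} (G : SimpleGraph V) (s : ℕ → V) : ℕ → Set V
  | 0 => ∅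
  | t + 1 => burnSet G s t ∪ {w | ∃ u ∈ burnSet G s t, G.Adj u w} ∪ {s t}

/-- The partial burning number `b(G, S)`: the least number of rounds needed to
burn every vertex of `S`. -/
noncomputable def pburn {V : Type*} (G : SimpleGraph V) (S : Set V) : ℕ :=
  sInf {r | ∃ s : ℕ → V, S ⊆ burnSet G s r}

/-- The burning number `b(G)`. -/
noncomputable def burn {V : Type*} (G : SimpleGraph V) : ℕ :=
  pburn G Set.univ

/-- The ball of radius `t` around `v` in graph distance. -/
def gball {V : Type*} (G : SimpleGraph V) (v : V) (t : ℕ) : Set V :=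
  {w | G.dist v w ≤ t}

/-- The `m × n` Cartesian grid `P_m □ P_n`; the first coordinate is the height (row). -/
def gridGraph (m n : ℕ) : SimpleGraph (Fin m × Fin n) :=
  (pathGraph m) □ (pathGraph n)

open Finset

namespace SimpleGraph

lemma Preconnected.dist_boxProd {α β : Type*} {G : SimpleGraph α} {H : SimpleGraph β}
    (hG : G.Preconnected) (hH : H.Preconnected) (x y : α × β) :
    (G □ H).dist x y = G.dist x.1 y.1 + H.dist x.2 y.2 := by
  have hGH : (G □ H).Preconnected := fun x y => reachable_boxProd.2 ⟨hG _ _, hH _ _⟩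
  apply Nat.cast_injective (R := ℕ∞)
  rw [Nat.cast_add, (hGH x y).coe_dist_eq_edist, edist_boxProd, (hG _ _).coe_dist_eq_edist,
    (hH _ _).coe_dist_eq_edist]

lemma Walk.natDist_le_length {n : ℕ} {u v : Fin n} (p : (pathGraph n).Walk u v) :
    Nat.dist u v ≤ p.length := by
  induction p with
  | nil => simp [Nat.dist_self]
  | @cons a b c hab p ih =>
    rw [pathGraph_adj] at hab
    have htri := Nat.dist.triangle_inequality a b c
    have hdist_ab : Nat.dist a b = 1 := by unfold Nat.dist; omega
    rw [Walk.length_cons]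
    omega

lemma pathGraph_dist_le_natDist {n : ℕ} (u v : Fin n) :
    (pathGraph n).dist u v ≤ Nat.dist u v := by
  wlog huv : u ≤ v generalizing u v
  · rw [dist_comm, Nat.dist_comm]; exact this v u (le_of_not_ge huv)
  rw [Nat.dist_eq_sub_of_le huv]
  obtain ⟨d, hd⟩ : ∃ d, (v : ℕ) = u + d := ⟨v - u, by omega⟩
  induction d generalizing v with
  | zero => simp [Fin.ext (hd.trans (add_zero _))]
  | succ d ih =>
    set v' : Fin n := ⟨u + d, by omega⟩
    have hadj : (pathGraph n).Adj v' v := pathGraph_adj.2 (Or.inl (by simp [v', hd]; omega))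
    calc (pathGraph n).dist u v ≤ (pathGraph n).dist u v' + (pathGraph n).dist v' v :=
          (pathGraph_preconnected n u v').dist_triangle_left _
      _ ≤ (v' - u) + 1 :=
          add_le_add (ih v' (Fin.le_def.2 (by simp [v'])) rfl) (dist_eq_one_iff_adj.2 hadj).le
      _ = v - u := by simp [v']; omega

lemma pathGraph_dist {n : ℕ} (u v : Fin n) : (pathGraph n).dist u v = Nat.dist u v := by
  refine le_antisymm (pathGraph_dist_le_natDist u v) ?_
  obtain ⟨p, hp⟩ := (pathGraph_preconnected n u v).exists_walk_length_eq_dist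
  exact hp ▸ p.natDist_le_length

end SimpleGraph

lemma gridGraph_dist {m n : ℕ} (p q : Fin m × Fin n) :
    (gridGraph m n).dist p q = Nat.dist p.1 q.1 + Nat.dist p.2 q.2 := by
  rw [gridGraph, (pathGraph_preconnected m).dist_boxProd (pathGraph_preconnected n),
    pathGraph_dist, pathGraph_dist]

lemma Finset.card_le_two_of_lt_add_two {s : Finset ℕ} (h : ∀ a ∈ s, ∀ b ∈ s, b < a + 2) :
    #s ≤ 2 := by
  rcases s.eq_empty_or_nonempty with rfl | hs
  · simp
  calc #s ≤ #(Icc (s.min' hs) (s.min' hs + 1)) := card_le_card fun b hb =>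
        mem_Icc.2 ⟨s.min'_le b hb, by have := h _ (s.min'_mem hs) b hb; omega⟩
    _ = 2 := by simp only [Nat.card_Icc]; omega

/-- The number of vertices, away from the boundary, that a ball of radius `t` contains in a row
at vertical distance `d` from its centre. -/
def chord (t d : ℕ) : ℕ := if d ≤ t then 2 * (t - d) + 1 else 0

lemma chord_antitone (t : ℕ) : Antitone (chord t) := by
  intro d d' h
  unfold chord
  split_ifs <;> omega

lemma chord_add_chord_le (t d d' : ℕ) :
    chord t d + chord t d' ≤ chord t 0 + chord t (d + d') := by
  unfold chord
  split_ifs <;> omega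

lemma exists_sum_chord_le {ι : Type*} [Nonempty ι] {T : Finset ι} (hT : #T ≤ 2) (t c : ℕ)
    (x : ι → ℕ) :
    ∃ a, ∑ i ∈ T, chord t (Nat.dist c (x i)) ≤
      ∑ i ∈ T, chord t (Nat.dist (x a) (x i)) := by
  classical
  rcases T.eq_empty_or_nonempty with rfl | ⟨a, ha⟩
  · exact ⟨Classical.arbitrary ι, by simp⟩
  refine ⟨a, ?_⟩
  rw [← insert_erase ha, sum_insert (notMem_erase a T), sum_insert (notMem_erase a T),
    Nat.dist_self]
  have hrest : #(T.erase a) ≤ 1 := by rw [card_erase_of_mem ha]; omega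
  rcases (T.erase a).eq_empty_or_nonempty with he | ⟨b, hb⟩
  · simpa [he] using chord_antitone t (Nat.zero_le _)
  rw [eq_singleton_iff_unique_mem.2 ⟨hb, fun c hc => card_le_one.1 hrest c hc b hb⟩,
    sum_singleton, sum_singleton]
  have htri : Nat.dist (x a) (x b) ≤ Nat.dist c (x a) + Nat.dist c (x b) :=
    Nat.dist_comm c (x a) ▸ Nat.dist.triangle_inequality _ _ _
  exact (chord_add_chord_le t _ _).trans (add_le_add_right (chord_antitone t htri) _)

/-- The number of vertices that a ball of radius `t` centred in column `y` contains in a row of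
length `n` at vertical distance `d` from its centre. -/
def rowCount (n t y d : ℕ) : ℕ := #{b : Fin n | d + Nat.dist y b ≤ t}

lemma rowCount_le_chord (n t y d : ℕ) : rowCount n t y d ≤ chord t d := by
  unfold rowCount chord
  split_ifs with hd
  · calc #{b : Fin n | d + Nat.dist y b ≤ t}
        ≤ #(Icc (y - (t - d)) (y + (t - d))) := by
          refine card_le_card_of_injOn (fun b => (b : ℕ)) (fun b hb => ?_) Fin.val_injective.injOn
          simp only [coe_filter, Set.mem_ofPred_eq, mem_univ, true_and] at hb
          simp only [coe_Icc, Set.mem_Icc]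
          unfold Nat.dist at hb
          omega
      _ ≤ 2 * (t - d) + 1 := by simp only [Nat.card_Icc]; omega
  · refine (card_eq_zero.2 (filter_eq_empty_iff.2 fun b _ => ?_)).le
    omega

lemma rowCount_eq_chord {n t : ℕ} (ht : 2 * t < n) (d : ℕ) : rowCount n t t d = chord t d := by
  unfold rowCount chord
  split_ifs with hd
  · rw [← card_map Fin.valEmbedding]
    calc _ = #(Icc d (2 * t - d)) := by
          congr 1
          ext j
          simp only [mem_map, mem_filter, mem_univ, true_and, Fin.valEmbedding_apply, mem_Icc]
          constructor
          · rintro ⟨b, hb, rfl⟩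
            unfold Nat.dist at hb
            omega
          · intro hj
            exact ⟨⟨j, by omega⟩, by unfold Nat.dist; simp; omega, rfl⟩
      _ = 2 * (t - d) + 1 := by simp only [Nat.card_Icc]; omega
  · refine card_eq_zero.2 (filter_eq_empty_iff.2 fun b _ => ?_)
    omega

def rowUnion {m n k : ℕ} (h : Fin k → Fin m) : Set (Fin m × Fin n) := {p | ∃ i, p.1 = h i}

lemma ncard_gball_inter_rowUnion {m n k : ℕ} (t : ℕ) {h : Fin k → Fin m}
    (hinj : Function.Injective h) (w : Fin m × Fin n) :
    (gball (gridGraph m n) w t ∩ rowUnion h).ncard =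
      ∑ i, rowCount n t w.2 (Nat.dist w.1 (h i)) := by
  have hset : gball (gridGraph m n) w t ∩ rowUnion h =
      Prod.map h id '' {x : Fin k × Fin n | Nat.dist w.1 (h x.1) + Nat.dist w.2 x.2 ≤ t} := by
    ext ⟨a, b⟩
    simp only [gball, rowUnion, gridGraph_dist, Set.mem_inter_iff, Set.mem_ofPred_eq,
      Set.mem_image, Prod.map, Prod.mk.injEq, Prod.exists, id]
    constructor
    · rintro ⟨hab, i, rfl⟩
      exact ⟨i, b, hab, rfl, rfl⟩
    · rintro ⟨i, b, hib, rfl, rfl⟩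
      exact ⟨hib, i, rfl⟩
  rw [hset, Set.ncard_image_of_injective _ (hinj.prodMap Function.injective_id),
    Set.ncard_eq_toFinset_card', Set.toFinset_ofPred, card_filter, Fintype.sum_prod_type]
  simp only [rowCount, card_filter]

lemma card_filter_dist_le_le_two {m k t : ℕ} {h : Fin k → Fin m} (hmono : StrictMono h)
    (hgap : ∀ i j : Fin k, (i : ℕ) + 2 = j → 2 * t + 2 ≤ (h j : ℕ) - h i) (y : ℕ) :
    #{i | Nat.dist y (h i) ≤ t} ≤ 2 := by
  rw [← card_map Fin.valEmbedding]
  refine card_le_two_of_lt_add_two ?_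
  simp only [mem_map, mem_filter, mem_univ, true_and, Fin.valEmbedding_apply]
  rintro _ ⟨i, hi, rfl⟩ _ ⟨j, hj, rfl⟩
  by_contra! hij
  have hgap_i := hgap i ⟨i + 2, by omega⟩ rfl
  have hmono_j : (h ⟨i + 2, by omega⟩ : ℕ) ≤ h j := hmono.monotone (Fin.le_def.2 hij)
  unfold Nat.dist at hi hj
  omega

lemma exists_mem_rowUnion_ncard_le {m n k t : ℕ} [Nonempty (Fin k)] (ht : 2 * t < n)
    {h : Fin k → Fin m} (hmono : StrictMono h)
    (hgap : ∀ i j : Fin k, (i : ℕ) + 2 = j → 2 * t + 2 ≤ (h j : ℕ) - h i)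
    (w : Fin m × Fin n) :
    ∃ v ∈ rowUnion h, (gball (gridGraph m n) w t ∩ rowUnion h).ncard ≤
      (gball (gridGraph m n) v t ∩ rowUnion h).ncard := by
  obtain ⟨a, ha⟩ := exists_sum_chord_le (card_filter_dist_le_le_two hmono hgap w.1) t w.1
    (fun i => (h i : ℕ))
  refine ⟨(h a, ⟨t, by omega⟩), ⟨a, rfl⟩, ?_⟩
  rw [ncard_gball_inter_rowUnion t hmono.injective, ncard_gball_inter_rowUnion t hmono.injective]
  calc ∑ i, rowCount n t w.2 (Nat.dist w.1 (h i))
      ≤ ∑ i, chord t (Nat.dist w.1 (h i)) := sum_le_sum fun i _ => rowCount_le_chord ..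
    _ = ∑ i with Nat.dist w.1 (h i) ≤ t, chord t (Nat.dist w.1 (h i)) := by
        refine (sum_filter_of_ne fun i _ hi => ?_).symm
        unfold chord at hi
        split_ifs at hi with hd
        exacts [hd, absurd rfl hi]
    _ ≤ ∑ i with Nat.dist w.1 (h i) ≤ t, chord t (Nat.dist (h a) (h i)) := ha
    _ ≤ ∑ i, chord t (Nat.dist (h a) (h i)) := sum_le_sum_of_subset (filter_subset _ _)
    _ = ∑ i, rowCount n t t (Nat.dist (h a) (h i)) := by simp only [rowCount_eq_chord ht]

/-- If the rows at heights `h_1 < … < h_k` satisfy `h_i - h_{i-2} ≥ 2t + 2` and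
`t ≤ (n-1)/2`, then the maximum of `|B(v,t) ∩ 𝒫|` over all vertices `v` of the grid
is attained at a vertex of `𝒫`. -/
theorem max_ball_inter_rows (m n k t : ℕ) (hk : 1 ≤ k) (hn : 1 ≤ n)
    (ht : 2 * t ≤ n - 1) (hgt : Fin k → Fin m) (hmono : StrictMono hgt)
    (hgap : ∀ i j : Fin k, (i : ℕ) + 2 = (j : ℕ) →
      2 * t + 2 ≤ (hgt j : ℕ) - (hgt i : ℕ)) :
    ∃ v ∈ {p : Fin m × Fin n | ∃ i : Fin k, p.1 = hgt i},
      ∀ w : Fin m × Fin n,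
        (gball (gridGraph m n) w t ∩ {p : Fin m × Fin n | ∃ i : Fin k, p.1 = hgt i}).ncard ≤
          (gball (gridGraph m n) v t ∩ {p : Fin m × Fin n | ∃ i : Fin k, p.1 = hgt i}).ncard := by
  have : Nonempty (Fin k) := ⟨⟨0, hk⟩⟩
  have : Nonempty (Fin m × Fin n) := ⟨(hgt ⟨0, hk⟩, ⟨0, hn⟩)⟩
  obtain ⟨w₀, -, hw₀⟩ := exists_max_image univ
    (fun w => (gball (gridGraph m n) w t ∩ rowUnion hgt).ncard) univ_nonempty
  obtain ⟨v, hv, hle⟩ := exists_mem_rowUnion_ncard_le (by omega) hmono hgap w₀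
  exact ⟨v, hv, fun w => (hw₀ w (mem_univ w)).trans hle⟩
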